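/- Let p be an odd prime, let χ be any multiplicative character of F_p^× with values in ℂ^×, and let η be the quadratic character of F_p^×. Then G(χ) ≠ G(χη) and G(χ) ≠ −G(χη). -/

import Mathlib

/-!
Write `ζ = exp(2πi/p)` and let `ω` be a primitive `(p-1)`-th root of unity. Then
`G(χ) - ε G(χη) = Σ_a χ(a) (1 - ε η(a)) ζ^a`, with all coefficients in `ℚ(ω)`. As `p` and `p - 1`
are coprime, `ωζ` is a primitive `p(p-1)`-th root of unity in `ℚ(ω, ζ)`, so the tower law forces
`[ℚ(ω, ζ) : ℚ(ω)] = p - 1`; hence `ζ, …, ζ^(p-1)` are linearly independent over `ℚ(ω)` and every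
coefficient vanishes. For `ε = -1` the coefficient at `a = 1` is `2χ(1)`, for `ε = 1` the
coefficient at a non-square `a` is `2χ(a)`.
-/

open Complex Polynomial IntermediateField

/-- The Gauss sum of a multiplicative character `φ : F_p^× → ℂ^×` of a prime field:
`G(φ) = Σ_{a ∈ F_p^×} exp(2πi·a/p)·φ(a)`. -/
noncomputable def gaussSumP (p : ℕ) [Fact p.Prime] (φ : (ZMod p)ˣ →* ℂˣ) : ℂ :=
  ∑ a : (ZMod p)ˣ,
    Complex.exp (2 * Real.pi * Complex.I * (((a : ZMod p).val : ℕ) : ℂ) / p) * (φ a : ℂ)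

theorem IsPrimitiveRoot.mul_of_coprime {M : Type*} [CommMonoid M] {ζ ω : M} {n m : ℕ}
    (hζ : IsPrimitiveRoot ζ n) (hω : IsPrimitiveRoot ω m) (hnm : n.Coprime m) :
    IsPrimitiveRoot (ζ * ω) (n * m) := by
  rw [IsPrimitiveRoot.iff_orderOf, (Commute.all ζ ω).orderOf_mul_eq_mul_orderOf_of_coprime
    (by rwa [← hζ.eq_orderOf, ← hω.eq_orderOf]), ← hζ.eq_orderOf, ← hω.eq_orderOf]

section

variable {L : Type*} [Field L] [CharZero L]

theorem IsPrimitiveRoot.finrank_adjoin_rat {x : L} {n : ℕ} (hn : 0 < n)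
    (hx : IsPrimitiveRoot x n) : Module.finrank ℚ ℚ⟮x⟯ = n.totient := by
  have : NeZero (n : ℚ) := ⟨by exact_mod_cast hn.ne'⟩
  rw [adjoin.finrank (hx.isIntegral hn).tower_top,
    ← hx.minpoly_eq_cyclotomic_of_irreducible (cyclotomic.irreducible_rat hn), natDegree_cyclotomic]

theorem IsPrimitiveRoot.natDegree_minpoly_adjoin_of_coprime {ζ ω : L} {n m : ℕ}
    (hζ : IsPrimitiveRoot ζ n) (hω : IsPrimitiveRoot ω m) (hn : 0 < n) (hm : 0 < m)
    (hnm : n.Coprime m) : (minpoly ℚ⟮ω⟯ ζ).natDegree = n.totient := by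
  set K := ℚ⟮ω⟯
  have hζK : IsIntegral K ζ := (hζ.isIntegral hn).tower_top
  apply le_antisymm
  · have hroot : aeval ζ (cyclotomic n K) = 0 := by
      rw [aeval_def, eval₂_eq_eval_map, map_cyclotomic]
      exact hζ.isRoot_cyclotomic hn
    calc (minpoly K ζ).natDegree ≤ (cyclotomic n K).natDegree :=
          natDegree_le_of_dvd (minpoly.dvd K ζ hroot) (cyclotomic_ne_zero n K)
      _ = n.totient := natDegree_cyclotomic n K
  · have : FiniteDimensional K K⟮ζ⟯ := adjoin.finiteDimensional hζK
    have : FiniteDimensional ℚ (K⟮ζ⟯.restrictScalars ℚ) := by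
      rw [show K⟮ζ⟯.restrictScalars ℚ = ℚ⟮ω, ζ⟯ from adjoin_simple_adjoin_simple ℚ ω ζ]
      exact finiteDimensional_adjoin_pair (hω.isIntegral hm).tower_top (hζ.isIntegral hn).tower_top
    have hle : ℚ⟮ω * ζ⟯ ≤ K⟮ζ⟯.restrictScalars ℚ := by
      rw [adjoin_simple_le_iff, mem_restrictScalars]
      exact mul_mem (IntermediateField.algebraMap_mem K⟮ζ⟯ (⟨ω, mem_adjoin_simple_self ℚ ω⟩ : K))
        (mem_adjoin_simple_self K ζ)
    have htower : Module.finrank ℚ K * (minpoly K ζ).natDegree =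
        Module.finrank ℚ (K⟮ζ⟯.restrictScalars ℚ) := by
      have : Module.Free K K⟮ζ⟯ := Module.Free.of_divisionRing K K⟮ζ⟯
      rw [← adjoin.finrank hζK, Module.finrank_mul_finrank]
      rfl
    have hωζ := hω.mul_of_coprime hζ hnm.symm
    have hdeg := finrank_le_of_le_right hle
    rw [← htower, hωζ.finrank_adjoin_rat (by positivity), hω.finrank_adjoin_rat hm,
      Nat.totient_mul hnm.symm] at hdeg
    exact Nat.le_of_mul_le_mul_left hdeg (Nat.totient_pos.mpr hm)

end

theorem linearIndependent_pow_val_units {K S : Type*} [Field K] [Field S] [Algebra K S]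
    {p : ℕ} [Fact p.Prime] {ζ : S} (hζ0 : ζ ≠ 0) (hdeg : (minpoly K ζ).natDegree = p - 1) :
    LinearIndependent K (fun a : (ZMod p)ˣ => ζ ^ (a : ZMod p).val) := by
  have hshift : LinearIndependent K (fun i : Fin (minpoly K ζ).natDegree => ζ * ζ ^ (i : ℕ)) :=
    (linearIndependent_pow ζ).map' (LinearMap.mulLeft K ζ)
      (LinearMap.ker_eq_bot.mpr (mul_right_injective₀ hζ0))
  have hpos (a : (ZMod p)ˣ) : 0 < (a : ZMod p).val := ZMod.val_pos.mpr a.ne_zero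
  let e (a : (ZMod p)ˣ) : Fin (minpoly K ζ).natDegree :=
    ⟨(a : ZMod p).val - 1, by have := ZMod.val_lt (a : ZMod p); have := hpos a; omega⟩
  have he : Function.Injective e := fun a b hab => by
    have := hpos a; have := hpos b
    exact Units.ext (ZMod.val_injective p (by simp only [e, Fin.mk.injEq] at hab; omega))
  convert hshift.comp e he using 2 with a
  simp only [Function.comp_apply, e, ← pow_succ', Nat.sub_add_cancel (hpos a)]

theorem MonoidHom.val_apply_mem_adjoin {G F L : Type*} [Monoid G] [Field F] [Field L]
    [Algebra F L] (φ : G →* Lˣ) {ω : L} {m : ℕ} [NeZero m] (hω : IsPrimitiveRoot ω m) {g : G}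
    (hg : g ^ m = 1) : (φ g : L) ∈ F⟮ω⟯ := by
  obtain ⟨i, -, hi⟩ := hω.eq_pow_of_pow_eq_one (ξ := (φ g : L)) <| by
    rw [← Units.val_pow_eq_pow_val, ← map_pow, hg, map_one, Units.val_one]
  exact hi ▸ pow_mem (mem_adjoin_simple_self F ω) i

theorem FiniteField.exists_units_not_isSquare {F : Type*} [Field F] [Fintype F]
    (hF : ringChar F ≠ 2) : ∃ g : Fˣ, ¬IsSquare g := by
  obtain ⟨x, hx⟩ := FiniteField.exists_nonsquare hF
  have hx0 : x ≠ 0 := fun h0 => hx (h0 ▸ IsSquare.zero)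
  exact ⟨Units.mk0 x hx0, fun ⟨b, hb⟩ => hx ⟨b, by simpa using congrArg Units.val hb⟩⟩

theorem gaussSumP_eq_sum_pow (p : ℕ) [Fact p.Prime] (φ : (ZMod p)ˣ →* ℂˣ) :
    gaussSumP p φ = ∑ a : (ZMod p)ˣ, (φ a : ℂ) * exp (2 * Real.pi * I / p) ^ (a : ZMod p).val := by
  refine Finset.sum_congr rfl fun a _ => ?_
  rw [← exp_nat_mul, mul_comm]
  ring_nf

theorem val_apply_eq_of_gaussSumP_eq_mul {p : ℕ} [hp : Fact p.Prime] {χ χ' : (ZMod p)ˣ →* ℂˣ}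
    {ε : ℚ} (h : gaussSumP p χ = ε * gaussSumP p χ') (a : (ZMod p)ˣ) :
    (χ a : ℂ) = ε * χ' a := by
  have hp1 : p - 1 ≠ 0 := Nat.sub_ne_zero_of_lt hp.out.one_lt
  have : NeZero (p - 1) := ⟨hp1⟩
  set ω := exp (2 * Real.pi * I / (p - 1 : ℕ))
  have hω : IsPrimitiveRoot ω (p - 1) := isPrimitiveRoot_exp (p - 1) hp1
  have hζ := isPrimitiveRoot_exp p hp.out.ne_zero
  have hcop : p.Coprime (p - 1) :=
    (Nat.coprime_self_sub_right hp.out.one_le).mpr p.coprime_one_right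
  have hli := linearIndependent_pow_val_units (K := ℚ⟮ω⟯) (p := p) (exp_ne_zero _) <| by
    rw [hζ.natDegree_minpoly_adjoin_of_coprime hω hp.out.pos (Nat.pos_of_ne_zero hp1) hcop,
      Nat.totient_prime hp.out]
  have hmem (a : (ZMod p)ˣ) : (χ a : ℂ) - ε * χ' a ∈ ℚ⟮ω⟯ :=
    sub_mem (χ.val_apply_mem_adjoin hω (ZMod.units_pow_card_sub_one_eq_one p a))
      (mul_mem (SubfieldClass.ratCast_mem _ ε)
        (χ'.val_apply_mem_adjoin hω (ZMod.units_pow_card_sub_one_eq_one p a)))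
  have hcoeff := Fintype.linearIndependent_iff.mp hli (fun a => ⟨_, hmem a⟩) <| by
    change ∑ a, ((χ a : ℂ) - ε * χ' a) * exp (2 * Real.pi * I / p) ^ (a : ZMod p).val = 0
    calc _ = gaussSumP p χ - ε * gaussSumP p χ' := by
          rw [gaussSumP_eq_sum_pow, gaussSumP_eq_sum_pow, Finset.mul_sum, ← Finset.sum_sub_distrib]
          exact Finset.sum_congr rfl fun a _ => by ring
      _ = 0 := by rw [h, sub_self]
  exact sub_eq_zero.mp (congrArg Subtype.val (hcoeff a))

/-- For an odd prime `p`, any multiplicative character `χ` of `F_p^×` and the quadratic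
character `η` of `F_p^×`, the Gauss sums satisfy `G(χ) ≠ G(χη)` and `G(χ) ≠ -G(χη)`. -/
theorem gauss_sum_ne_gauss_sum_mul_quadratic (p : ℕ) [Fact p.Prime] (hp : p ≠ 2)
    (χ η : (ZMod p)ˣ →* ℂˣ)
    (hη : ∀ a : (ZMod p)ˣ, (η a : ℂ) = if ∃ b : (ZMod p)ˣ, b ^ 2 = a then 1 else -1) :
    gaussSumP p χ ≠ gaussSumP p (χ * η) ∧ gaussSumP p χ ≠ -gaussSumP p (χ * η) := by
  obtain ⟨g, hg⟩ :=
    FiniteField.exists_units_not_isSquare (F := ZMod p) (by rwa [ZMod.ringChar_zmod_n])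
  have hηg : (η g : ℂ) = -1 := by
    rw [hη, if_neg]
    rintro ⟨b, rfl⟩
    exact hg ⟨b, sq b⟩
  constructor
  · intro h
    have hχg := val_apply_eq_of_gaussSumP_eq_mul (ε := 1) (by simpa using h) g
    rw [MonoidHom.mul_apply, Units.val_mul, hηg] at hχg
    exact (χ g).ne_zero (by linear_combination hχg / 2)
  · intro h
    have hχ1 := val_apply_eq_of_gaussSumP_eq_mul (ε := -1) (by simpa using h) 1
    norm_num at hχ1
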